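/- Let C : ℤ^d × ℤ^d → [0,∞) satisfy (A1), (A2) and (A3). Then there exist c > 0 depending only on N₀ and κ₂, and Θ₂ ≥ 1 depending only on κ₁, κ₂, N₀, d and α, such that for every ρ > 0, every λ > 0 and every f : ρ^{-1}ℤ^d → ℝ, one has ℰ_α^{ρ,λ}(f,f) ≤ c·ℰ^{ρ,λΘ₂}(f,f); in particular ℰ_α^{ρ}(f,f) ≤ c·ℰ^{ρ}(f,f). -/

import Mathlib

open scoped ENNReal Classical

/-- Euclidean norm of a point of `ℤ^d`. -/
noncomputable def zNorm (d : ℕ) (v : Fin d → ℤ) : ℝ := Real.sqrt (∑ i, ((v i : ℝ))^2)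

/-- Distance of the lattice points `x/ρ` and `y/ρ` of `ρ⁻¹ℤ^d`. -/
noncomputable def latDist (d : ℕ) (ρ : ℝ) (x y : Fin d → ℤ) : ℝ := zNorm d (x - y) / ρ

/-- The truncated Dirichlet form `ℰ^{ρ,λ}` on the scaled lattice `ρ⁻¹ℤ^d` for a
conductivity `C` on `ℤ^d` (scaled as `C^ρ(x,y) = ρ^{d+α} C(ρx,ρy)`). -/
noncomputable def ECtrunc (d : ℕ) (α ρ lam : ℝ) (C : (Fin d → ℤ) → (Fin d → ℤ) → ℝ)
    (f : (Fin d → ℤ) → ℝ) : ℝ≥0∞ :=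
  (1/2 : ℝ≥0∞) * ∑' p : (Fin d → ℤ) × (Fin d → ℤ),
    if latDist d ρ p.1 p.2 ≤ lam then
      ENNReal.ofReal ((f p.1 - f p.2) ^ 2 * (ρ ^ ((d:ℝ) + α) * C p.1 p.2) * ρ ^ (-2*(d:ℝ)))
    else 0

/-- The full Dirichlet form `ℰ^ρ`. -/
noncomputable def ECfull (d : ℕ) (α ρ : ℝ) (C : (Fin d → ℤ) → (Fin d → ℤ) → ℝ)
    (f : (Fin d → ℤ) → ℝ) : ℝ≥0∞ :=
  (1/2 : ℝ≥0∞) * ∑' p : (Fin d → ℤ) × (Fin d → ℤ),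
    ENNReal.ofReal ((f p.1 - f p.2) ^ 2 * (ρ ^ ((d:ℝ) + α) * C p.1 p.2) * ρ ^ (-2*(d:ℝ)))

/-- The truncated α-stable Dirichlet form `ℰ_α^{ρ,λ}` on the scaled lattice. -/
noncomputable def EAtrunc (d : ℕ) (α ρ lam : ℝ) (f : (Fin d → ℤ) → ℝ) : ℝ≥0∞ :=
  (1/2 : ℝ≥0∞) * ∑' p : (Fin d → ℤ) × (Fin d → ℤ),
    if 0 < latDist d ρ p.1 p.2 ∧ latDist d ρ p.1 p.2 ≤ lam then
      ENNReal.ofReal ((f p.1 - f p.2) ^ 2 * latDist d ρ p.1 p.2 ^ (-((d:ℝ) + α))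
        * ρ ^ (-2*(d:ℝ)))
    else 0

/-- The full α-stable Dirichlet form `ℰ_α^ρ` on the scaled lattice. -/
noncomputable def EAfull (d : ℕ) (α ρ : ℝ) (f : (Fin d → ℤ) → ℝ) : ℝ≥0∞ :=
  (1/2 : ℝ≥0∞) * ∑' p : (Fin d → ℤ) × (Fin d → ℤ),
    if 0 < latDist d ρ p.1 p.2 then
      ENNReal.ofReal ((f p.1 - f p.2) ^ 2 * latDist d ρ p.1 p.2 ^ (-((d:ℝ) + α))
        * ρ ^ (-2*(d:ℝ)))
    else 0

/-!
Along the chain `x = z₀, …, z_l = y` of (A3), telescoping and Cauchy–Schwarz give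
`(f x - f y)² ≤ N₀ ∑ᵢ (f zᵢ - f zᵢ₊₁)²`, and each edge has `|x - y|^{-d-α} ≤ C(zᵢ, zᵢ₊₁)/κ₂`.
Summing over all pairs, each edge is used by at most `N₀` pairs, each at most `N₀` times, so
`ℰ_α ≤ (N₀³/κ₂) ℰ`; the powers of `ρ` are the same on both sides. Comparing (A2) with the lower
bound of (A3) shows that a chain edge is at most `(κ₁/κ₂)^{1/(d+α)}` times longer than `|x - y|`,
which accounts for the truncation level `λ Θ₂`.
-/

noncomputable def restrictedEnergy {V : Type*} (w : V → V → ℝ) (S : Set (V × V)) (f : V → ℝ) :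
    ℝ≥0∞ :=
  ∑' p : V × V, S.indicator (fun p => ENNReal.ofReal ((f p.1 - f p.2) ^ 2 * w p.1 p.2)) p

theorem sq_sub_le_mul_sum_sq_sub (g : ℕ → ℝ) (n : ℕ) :
    (g 0 - g n) ^ 2 ≤ n * ∑ i ∈ Finset.range n, (g i - g (i + 1)) ^ 2 := by
  have h := sq_sum_le_card_mul_sum_sq (s := Finset.range n) (f := fun i => g i - g (i + 1))
  rwa [Finset.sum_range_sub', Finset.card_range] at h

theorem sq_sub_mul_le_of_chain {V : Type*} {κ N : ℝ} (hκ : 0 < κ) {C : V → V → ℝ}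
    {f : V → ℝ} {z : ℕ → V} {n : ℕ} (hn : (n : ℝ) ≤ N) {x y : V} (hx : z 0 = x) (hy : z n = y)
    {K : ℝ} (hK : 0 ≤ K) (hC : ∀ i < n, κ * K ≤ C (z i) (z (i + 1))) :
    (f x - f y) ^ 2 * K ≤
      N / κ * ∑ i ∈ Finset.range n, (f (z i) - f (z (i + 1))) ^ 2 * C (z i) (z (i + 1)) := by
  have hsq := sq_sub_le_mul_sum_sq_sub (f ∘ z) n
  simp only [Function.comp_apply, hx, hy] at hsq
  calc (f x - f y) ^ 2 * K
      ≤ (N * ∑ i ∈ Finset.range n, (f (z i) - f (z (i + 1))) ^ 2) * K := by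
        gcongr
        exact hsq.trans (by gcongr)
    _ = N / κ * ∑ i ∈ Finset.range n, (f (z i) - f (z (i + 1))) ^ 2 * (κ * K) := by
        simp only [Finset.mul_sum, Finset.sum_mul]
        refine Finset.sum_congr rfl fun i _ => ?_
        field_simp
    _ ≤ N / κ * ∑ i ∈ Finset.range n, (f (z i) - f (z (i + 1))) ^ 2 * C (z i) (z (i + 1)) := by
        refine mul_le_mul_of_nonneg_left (Finset.sum_le_sum fun i hi => ?_) ?_
        · exact mul_le_mul_of_nonneg_left (hC i (Finset.mem_range.1 hi)) (sq_nonneg _)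
        · exact div_nonneg ((Nat.cast_nonneg n).trans hn) hκ.le

theorem ENNReal.tsum_le_mul_tsum_of_fiber_card_le {A B : Type*} {G : A → ℝ≥0∞}
    {F : B → ℝ≥0∞} {Φ : A → B} {N : ℕ} (hGF : ∀ a, G a ≤ F (Φ a))
    (hfiber : ∀ b, ∃ t : Finset A, (∀ a, Φ a = b → G a ≠ 0 → a ∈ t) ∧ t.card ≤ N) :
    ∑' a, G a ≤ N * ∑' b, F b := by
  classical
  rw [ENNReal.tsum_eq_iSup_sum]
  refine iSup_le fun s => ?_
  set s' := s.filter (fun a => G a ≠ 0)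
  have hcard : ∀ b, ((s'.filter fun a => Φ a = b).card) • F b ≤ N * F b := by
    intro b
    obtain ⟨t, ht, htN⟩ := hfiber b
    have hsub : s'.filter (fun a => Φ a = b) ⊆ t := fun a ha => by
      simp only [s', Finset.mem_filter] at ha
      exact ht a ha.2 ha.1.2
    rw [nsmul_eq_mul]
    gcongr
    exact_mod_cast (Finset.card_le_card hsub).trans htN
  calc ∑ a ∈ s, G a = ∑ a ∈ s', G a := (Finset.sum_filter_ne_zero s).symm
    _ ≤ ∑ a ∈ s', F (Φ a) := Finset.sum_le_sum fun a _ => hGF a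
    _ = ∑ b ∈ s'.image Φ, ((s'.filter fun a => Φ a = b).card) • F b := Finset.sum_comp F Φ
    _ ≤ ∑ b ∈ s'.image Φ, N * F b := Finset.sum_le_sum fun b _ => hcard b
    _ = N * ∑ b ∈ s'.image Φ, F b := (Finset.mul_sum _ _ _).symm
    _ ≤ N * ∑' b, F b := by gcongr; exact ENNReal.sum_le_tsum _

section Chains

variable {V : Type*} {N : ℕ} {l : V → V → ℕ} {z : V → V → ℕ → V}

def chainUsers (l : V → V → ℕ) (z : V → V → ℕ → V) (ζ ξ : V) : Set (V × V) :=
  {p | p.1 ≠ p.2 ∧ ∃ k < l p.1 p.2, z p.1 p.2 k = ζ ∧ z p.1 p.2 (k + 1) = ξ}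

theorem tsum_chain_edges_le (hl : ∀ x y, x ≠ y → l x y ≤ N)
    (hcount : ∀ ζ ξ, (chainUsers l z ζ ξ).Finite ∧ (chainUsers l z ζ ξ).ncard ≤ N)
    (F : V × V → ℝ≥0∞) :
    ∑' p : V × V, ∑' i : ℕ,
        (if p.1 ≠ p.2 ∧ i < l p.1 p.2 then F (z p.1 p.2 i, z p.1 p.2 (i + 1)) else 0) ≤
      (N * N : ℕ) * ∑' e, F e := by
  refine (ENNReal.tsum_prod' (f := fun a : (V × V) × ℕ =>
    if a.1.1 ≠ a.1.2 ∧ a.2 < l a.1.1 a.1.2 then F (z a.1.1 a.1.2 a.2, z a.1.1 a.1.2 (a.2 + 1))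
    else 0)).symm.trans_le <| ENNReal.tsum_le_mul_tsum_of_fiber_card_le
    (Φ := fun a => (z a.1.1 a.1.2 a.2, z a.1.1 a.1.2 (a.2 + 1))) (fun a => ?_) (fun e => ?_)
  · split_ifs
    · exact le_rfl
    · exact zero_le
  -- the fibre over `e` lies in (users of `e`) × (the at most `N` positions along a chain)
  refine ⟨(hcount e.1 e.2).1.toFinset ×ˢ Finset.range N, fun a hΦa hGa => ?_, ?_⟩
  · obtain ⟨hne, hlt⟩ : a.1.1 ≠ a.1.2 ∧ a.2 < l a.1.1 a.1.2 := by
      by_contra h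
      exact hGa (if_neg h)
    rw [Finset.mem_product, Set.Finite.mem_toFinset, Finset.mem_range]
    exact ⟨⟨hne, a.2, hlt, by rw [← hΦa], by rw [← hΦa]⟩, hlt.trans_le (hl _ _ hne)⟩
  · rw [Finset.card_product, Finset.card_range, ← Set.ncard_eq_toFinset_card _ (hcount e.1 e.2).1]
    exact Nat.mul_le_mul_right N (hcount e.1 e.2).2

theorem restrictedEnergy_le_of_chains {κ : ℝ} (hκ : 0 < κ) {K C : V → V → ℝ}
    (hK : ∀ x y, 0 ≤ K x y)
    (hchain : ∀ x y, x ≠ y → l x y ≤ N ∧ z x y 0 = x ∧ z x y (l x y) = y ∧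
      ∀ i < l x y, κ * K x y ≤ C (z x y i) (z x y (i + 1)))
    (hcount : ∀ ζ ξ, (chainUsers l z ζ ξ).Finite ∧ (chainUsers l z ζ ξ).ncard ≤ N)
    {S T : Set (V × V)}
    (hST : ∀ p ∈ S, p.1 ≠ p.2 ∧ ∀ i < l p.1 p.2, (z p.1 p.2 i, z p.1 p.2 (i + 1)) ∈ T)
    (f : V → ℝ) :
    restrictedEnergy K S f ≤ ENNReal.ofReal (N ^ 3 / κ) * restrictedEnergy C T f := by
  set F : V × V → ℝ≥0∞ :=
    T.indicator fun e => ENNReal.ofReal ((f e.1 - f e.2) ^ 2 * C e.1 e.2) with hF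
  have hpair : ∀ p : V × V,
      S.indicator (fun p => ENNReal.ofReal ((f p.1 - f p.2) ^ 2 * K p.1 p.2)) p ≤
        ENNReal.ofReal (N / κ) * ∑' i : ℕ,
          (if p.1 ≠ p.2 ∧ i < l p.1 p.2 then F (z p.1 p.2 i, z p.1 p.2 (i + 1)) else 0) := by
    intro p
    by_cases hp : p ∈ S
    swap
    · simp only [Set.indicator_of_notMem hp, zero_le]
    obtain ⟨hne, hT⟩ := hST p hp
    obtain ⟨hl, hz0, hzl, hC⟩ := hchain p.1 p.2 hne
    have hCnonneg : ∀ i < l p.1 p.2, 0 ≤ C (z p.1 p.2 i) (z p.1 p.2 (i + 1)) :=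
      fun i hi => (mul_nonneg hκ.le (hK _ _)).trans (hC i hi)
    have hreal := sq_sub_mul_le_of_chain hκ (N := N) (f := f) (by exact_mod_cast hl) hz0 hzl
      (hK _ _) hC
    rw [Set.indicator_of_mem hp]
    refine (ENNReal.ofReal_le_ofReal hreal).trans ?_
    rw [ENNReal.ofReal_mul (by positivity), ENNReal.ofReal_sum_of_nonneg fun i hi =>
      mul_nonneg (sq_nonneg _) (hCnonneg i (Finset.mem_range.1 hi))]
    gcongr
    refine le_trans (le_of_eq (Finset.sum_congr rfl fun i hi => ?_)) (ENNReal.sum_le_tsum _)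
    have hi := Finset.mem_range.1 hi
    rw [if_pos ⟨hne, hi⟩, hF, Set.indicator_of_mem (hT i hi)]
  calc restrictedEnergy K S f
      ≤ ∑' p : V × V, ENNReal.ofReal (N / κ) * ∑' i : ℕ,
          (if p.1 ≠ p.2 ∧ i < l p.1 p.2 then F (z p.1 p.2 i, z p.1 p.2 (i + 1)) else 0) :=
        ENNReal.tsum_le_tsum hpair
    _ = ENNReal.ofReal (N / κ) * ∑' p : V × V, ∑' i : ℕ,
          (if p.1 ≠ p.2 ∧ i < l p.1 p.2 then F (z p.1 p.2 i, z p.1 p.2 (i + 1)) else 0) :=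
        ENNReal.tsum_mul_left
    _ ≤ ENNReal.ofReal (N / κ) * ((N * N : ℕ) * ∑' e, F e) := by
        gcongr
        exact tsum_chain_edges_le (fun x y hxy => (hchain x y hxy).1) hcount F
    _ = ENNReal.ofReal (N ^ 3 / κ) * restrictedEnergy C T f := by
        rw [← mul_assoc, ← ENNReal.ofReal_natCast, ← ENNReal.ofReal_mul (by positivity)]
        congr 2
        push_cast
        ring

end Chains

theorem le_rpow_one_div_mul_of_mul_rpow_neg_le {a b κ₁ κ₂ s : ℝ} (ha : 0 < a) (hb : 0 < b)
    (hκ₂ : 0 < κ₂) (hs : 0 < s) (h : κ₂ * a ^ (-s) ≤ κ₁ * b ^ (-s)) :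
    b ≤ (κ₁ / κ₂) ^ (1 / s) * a := by
  rw [Real.rpow_neg ha.le, Real.rpow_neg hb.le] at h
  have has : 0 < a ^ s := Real.rpow_pos_of_pos ha s
  have hbs : 0 < b ^ s := Real.rpow_pos_of_pos hb s
  have hκ₁ : 0 < κ₁ := pos_of_mul_pos_left ((by positivity : 0 < κ₂ * (a ^ s)⁻¹).trans_le h)
    (inv_pos.2 hbs).le
  have hpow : b ^ s ≤ ((κ₁ / κ₂) ^ (1 / s) * a) ^ s := by
    rw [Real.mul_rpow (by positivity) ha.le, ← Real.rpow_mul (by positivity),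
      one_div_mul_cancel hs.ne', Real.rpow_one, div_mul_eq_mul_div, le_div_iff₀ hκ₂]
    rw [← div_eq_mul_inv, ← div_eq_mul_inv, div_le_div_iff₀ has hbs] at h
    linarith
  exact (Real.rpow_le_rpow_iff hb.le (by positivity) hs).1 hpow

theorem zNorm_nonneg (d : ℕ) (v : Fin d → ℤ) : 0 ≤ zNorm d v := Real.sqrt_nonneg _

theorem zNorm_pos {d : ℕ} {v : Fin d → ℤ} (hv : v ≠ 0) : 0 < zNorm d v := by
  obtain ⟨i, hi⟩ := Function.ne_iff.1 hv
  refine Real.sqrt_pos.2 (lt_of_lt_of_le ?_ (Finset.single_le_sum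
    (f := fun j => ((v j : ℝ)) ^ 2) (fun j _ => sq_nonneg _) (Finset.mem_univ i)))
  have : (v i : ℝ) ≠ 0 := by exact_mod_cast hi
  positivity

theorem zNorm_zero (d : ℕ) : zNorm d 0 = 0 := by simp [zNorm]

theorem latDist_pos_iff {d : ℕ} {ρ : ℝ} (hρ : 0 < ρ) {x y : Fin d → ℤ} :
    0 < latDist d ρ x y ↔ x ≠ y := by
  refine ⟨fun h hxy => ?_, fun h => div_pos (zNorm_pos (sub_ne_zero.2 h)) hρ⟩
  rw [latDist, hxy, sub_self, zNorm_zero, zero_div] at h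
  exact lt_irrefl 0 h

theorem zNorm_sub_le_of_le_conductance {d : ℕ} {κ₁ κ₂ s : ℝ} (hκ₂ : 0 < κ₂) (hs : 0 < s)
    {C : (Fin d → ℤ) → (Fin d → ℤ) → ℝ} (hCdiag : ∀ x, C x x = 0)
    (hA2 : ∀ x y, x ≠ y → C x y ≤ κ₁ * zNorm d (x - y) ^ (-s))
    {x y u v : Fin d → ℤ} (hxy : x ≠ y) (huv : κ₂ * zNorm d (x - y) ^ (-s) ≤ C u v) :
    zNorm d (u - v) ≤ (κ₁ / κ₂) ^ (1 / s) * zNorm d (x - y) := by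
  have hn : 0 < zNorm d (x - y) := zNorm_pos (sub_ne_zero.2 hxy)
  have hne : u ≠ v := by
    rintro rfl
    rw [hCdiag] at huv
    exact (mul_pos hκ₂ (Real.rpow_pos_of_pos hn _)).not_ge huv
  exact le_rpow_one_div_mul_of_mul_rpow_neg_le hn (zNorm_pos (sub_ne_zero.2 hne)) hκ₂ hs
    (huv.trans (hA2 u v hne))

section Scaling

variable {d : ℕ} {α ρ : ℝ}

theorem ofReal_latDist_term (hρ : 0 < ρ) (f : (Fin d → ℤ) → ℝ) (x y : Fin d → ℤ) :
    ENNReal.ofReal ((f x - f y) ^ 2 * latDist d ρ x y ^ (-((d:ℝ) + α)) * ρ ^ (-2 * (d:ℝ))) =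
      ENNReal.ofReal (ρ ^ ((d:ℝ) + α) * ρ ^ (-2 * (d:ℝ))) *
        ENNReal.ofReal ((f x - f y) ^ 2 * zNorm d (x - y) ^ (-((d:ℝ) + α))) := by
  rw [← ENNReal.ofReal_mul (by positivity), latDist, Real.div_rpow (zNorm_nonneg d _) hρ.le,
    Real.rpow_neg hρ.le, div_inv_eq_mul]
  ring_nf

theorem ofReal_conductance_term (hρ : 0 < ρ) (f : (Fin d → ℤ) → ℝ)
    (C : (Fin d → ℤ) → (Fin d → ℤ) → ℝ) (x y : Fin d → ℤ) :
    ENNReal.ofReal ((f x - f y) ^ 2 * (ρ ^ ((d:ℝ) + α) * C x y) * ρ ^ (-2 * (d:ℝ))) =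
      ENNReal.ofReal (ρ ^ ((d:ℝ) + α) * ρ ^ (-2 * (d:ℝ))) *
        ENNReal.ofReal ((f x - f y) ^ 2 * C x y) := by
  rw [← ENNReal.ofReal_mul (by positivity)]
  ring_nf

theorem EAtrunc_eq (hρ : 0 < ρ) (lam : ℝ) (f : (Fin d → ℤ) → ℝ) :
    EAtrunc d α ρ lam f = 1 / 2 * ENNReal.ofReal (ρ ^ ((d:ℝ) + α) * ρ ^ (-2 * (d:ℝ))) *
      restrictedEnergy (fun x y => zNorm d (x - y) ^ (-((d:ℝ) + α)))
        {p | p.1 ≠ p.2 ∧ latDist d ρ p.1 p.2 ≤ lam} f := by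
  rw [EAtrunc, restrictedEnergy, mul_assoc, ← ENNReal.tsum_mul_left (a := ENNReal.ofReal _)]
  congr 1
  refine tsum_congr fun p => ?_
  simp only [Set.indicator_apply, Set.mem_ofPred_eq, latDist_pos_iff hρ]
  split_ifs
  · exact ofReal_latDist_term hρ f p.1 p.2
  · rw [mul_zero]

theorem EAfull_eq (hρ : 0 < ρ) (f : (Fin d → ℤ) → ℝ) :
    EAfull d α ρ f = 1 / 2 * ENNReal.ofReal (ρ ^ ((d:ℝ) + α) * ρ ^ (-2 * (d:ℝ))) *
      restrictedEnergy (fun x y => zNorm d (x - y) ^ (-((d:ℝ) + α))) {p | p.1 ≠ p.2} f := by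
  rw [EAfull, restrictedEnergy, mul_assoc, ← ENNReal.tsum_mul_left (a := ENNReal.ofReal _)]
  congr 1
  refine tsum_congr fun p => ?_
  simp only [Set.indicator_apply, Set.mem_ofPred_eq, latDist_pos_iff hρ]
  split_ifs
  · exact ofReal_latDist_term hρ f p.1 p.2
  · rw [mul_zero]

theorem ECtrunc_eq (hρ : 0 < ρ) (lam : ℝ) (C : (Fin d → ℤ) → (Fin d → ℤ) → ℝ)
    (f : (Fin d → ℤ) → ℝ) :
    ECtrunc d α ρ lam C f = 1 / 2 * ENNReal.ofReal (ρ ^ ((d:ℝ) + α) * ρ ^ (-2 * (d:ℝ))) *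
      restrictedEnergy C {p | latDist d ρ p.1 p.2 ≤ lam} f := by
  rw [ECtrunc, restrictedEnergy, mul_assoc, ← ENNReal.tsum_mul_left (a := ENNReal.ofReal _)]
  congr 1
  refine tsum_congr fun p => ?_
  simp only [Set.indicator_apply, Set.mem_ofPred_eq]
  split_ifs
  · exact ofReal_conductance_term hρ f C p.1 p.2
  · rw [mul_zero]

theorem ECfull_eq (hρ : 0 < ρ) (C : (Fin d → ℤ) → (Fin d → ℤ) → ℝ) (f : (Fin d → ℤ) → ℝ) :
    ECfull d α ρ C f = 1 / 2 * ENNReal.ofReal (ρ ^ ((d:ℝ) + α) * ρ ^ (-2 * (d:ℝ))) *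
      restrictedEnergy C Set.univ f := by
  rw [ECfull, restrictedEnergy, mul_assoc, ← ENNReal.tsum_mul_left (a := ENNReal.ofReal _)]
  simp only [Set.indicator_univ]
  congr 1
  exact tsum_congr fun p => ofReal_conductance_term hρ f C p.1 p.2

end Scaling

theorem stmt3 (κ₂ : ℝ) (hκ₂ : 0 < κ₂) (N₀ : ℕ) :
    -- c depends only on N₀ and κ₂
    ∃ c > (0:ℝ),
      ∀ (d : ℕ), 1 ≤ d → ∀ (α : ℝ), α ∈ Set.Ioo (0:ℝ) 2 → ∀ (κ₁ : ℝ), 0 < κ₁ →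
      -- Θ₂ depends only on κ₁, κ₂, N₀, d and α
      ∃ Θ₂ : ℝ, 1 ≤ Θ₂ ∧
        ∀ (C : (Fin d → ℤ) → (Fin d → ℤ) → ℝ),
          (∀ x y, 0 ≤ C x y) →
          -- (A1)
          (∀ x y, C x y = C y x) → (∀ x, C x x = 0) →
          -- (A2)
          (∀ x y, x ≠ y → C x y ≤ κ₁ * zNorm d (x - y) ^ (-((d:ℝ) + α))) →
          -- (A3)
          ∀ (l : (Fin d → ℤ) → (Fin d → ℤ) → ℕ)
            (z : (Fin d → ℤ) → (Fin d → ℤ) → ℕ → (Fin d → ℤ)),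
            (∀ x y, x ≠ y → l x y ≤ N₀ ∧ z x y 0 = x ∧ z x y (l x y) = y ∧
              ∀ i < l x y,
                κ₂ * zNorm d (x - y) ^ (-((d:ℝ) + α)) ≤ C (z x y i) (z x y (i+1))) →
            (∀ ζ ξ : Fin d → ℤ,
              {p : (Fin d → ℤ) × (Fin d → ℤ) | p.1 ≠ p.2 ∧
                ∃ k < l p.1 p.2, z p.1 p.2 k = ζ ∧ z p.1 p.2 (k+1) = ξ}.Finite ∧
              {p : (Fin d → ℤ) × (Fin d → ℤ) | p.1 ≠ p.2 ∧
                ∃ k < l p.1 p.2, z p.1 p.2 k = ζ ∧ z p.1 p.2 (k+1) = ξ}.ncard ≤ N₀) →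
            -- conclusion
            ∀ (ρ : ℝ), 0 < ρ → ∀ (lam : ℝ), 0 < lam → ∀ f : (Fin d → ℤ) → ℝ,
              EAtrunc d α ρ lam f ≤ ENNReal.ofReal c * ECtrunc d α ρ (lam * Θ₂) C f ∧
              EAfull d α ρ f ≤ ENNReal.ofReal c * ECfull d α ρ C f := by
  refine ⟨((N₀:ℝ) ^ 3 + 1) / κ₂, by positivity, fun d _ α hα κ₁ _ => ?_⟩
  have hs : 0 < (d:ℝ) + α := add_pos_of_nonneg_of_pos d.cast_nonneg hα.1
  set θ := (κ₁ / κ₂) ^ (1 / ((d:ℝ) + α))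
  refine ⟨max 1 θ, le_max_left _ _, fun C _ _ hCdiag hA2 l z hA3 hcount ρ hρ lam _ f => ?_⟩
  have compare := fun S T => restrictedEnergy_le_of_chains hκ₂
    (fun x y => Real.rpow_nonneg (zNorm_nonneg d (x - y)) _) hA3 hcount (S := S) (T := T) (f := f)
  have rescale {a b : ℝ≥0∞} (r : ℝ≥0∞) (hab : a ≤ ENNReal.ofReal ((N₀:ℝ) ^ 3 / κ₂) * b) :
      1 / 2 * r * a ≤ ENNReal.ofReal (((N₀:ℝ) ^ 3 + 1) / κ₂) * (1 / 2 * r * b) :=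
    calc 1 / 2 * r * a ≤ 1 / 2 * r * (ENNReal.ofReal ((N₀:ℝ) ^ 3 / κ₂) * b) := by gcongr
      _ = ENNReal.ofReal ((N₀:ℝ) ^ 3 / κ₂) * (1 / 2 * r * b) := by ring
      _ ≤ _ := by gcongr; linarith
  have hedge : ∀ p : (Fin d → ℤ) × (Fin d → ℤ), p.1 ≠ p.2 → ∀ i < l p.1 p.2,
      latDist d ρ (z p.1 p.2 i) (z p.1 p.2 (i + 1)) ≤ θ * latDist d ρ p.1 p.2 := by
    intro p hne i hi
    rw [latDist, latDist, mul_div_assoc']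
    gcongr
    exact zNorm_sub_le_of_le_conductance hκ₂ hs hCdiag hA2 hne ((hA3 _ _ hne).2.2.2 i hi)
  constructor
  · rw [EAtrunc_eq hρ, ECtrunc_eq hρ]
    refine rescale _ (compare _ _ fun p hp => ⟨hp.1, fun i hi => (hedge p hp.1 i hi).trans ?_⟩)
    rw [mul_comm lam]
    exact mul_le_mul (le_max_right _ _) hp.2 (div_nonneg (zNorm_nonneg d _) hρ.le)
      (zero_le_one.trans (le_max_left _ _))
  · rw [EAfull_eq hρ, ECfull_eq hρ]
    exact rescale _ (compare _ _ fun p hp => ⟨hp, fun _ _ => Set.mem_univ _⟩)
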